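/- Let 𝔽 be a field of characteristic zero, let α, β ∈ 𝔽 with α ≠ β, and let k ≥ 1. Define the Bernstein polynomials φ_i(λ) := C(k,i)·(λ−α)^i·(β−λ)^{k−i} for i = 0,…,k (where C(k,i) is the binomial coefficient), and let π(λ) := (φ_k(λ), …, φ_0(λ))ᵀ. Define the k×(k+1) matrix pencil L(λ) with entries C(k, k−r)·(λ−β) in position (r,r) and C(k, k−r+1)·(λ−α) in position (r,r+1), and zeros elsewhere. Then L(λ)·π(λ) = 0 identically, L(λ₀) has rank k for every λ₀ ∈ 𝔽, and the k×(k+1) matrix formed by the coefficients of λ in the entries of L(λ) has rank k (so L(λ) is a dual minimal basis for the Bernstein basis of degree k on [α, β]). -/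

import Mathlib

/-!
Row `r` of `L π` only meets the consecutive Bernstein polynomials `φ (k - r)` and
`φ (k - r - 1)`, and after factoring out `C(k, r) C(k, r + 1) (λ - α)^(k - r) (β - λ)^r`
it is `(λ - β) + (β - λ) = 0`. For the ranks, `L(λ₀)` is bidiagonal: if `λ₀ ≠ β` its
diagonal entries are nonzero (binomial coefficients do not vanish in characteristic zero),
and if `λ₀ = β` its superdiagonal entries `C(k, k - r) (β - α)` are; either way a triangular
`k × k` minor is nonzero. The coefficient matrix of `λ` is bidiagonal with the binomial
coefficients on its diagonal.
-/

open Polynomial Matrix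

namespace PaperLin

variable {F : Type*} [Field F]

theorem rank_eq_card_of_isUnit_det_submatrix {m n R : Type*} [Fintype m] [Fintype n]
    [DecidableEq m] [CommRing R] [StrongRankCondition R] (A : Matrix m n R) (f : m → n)
    (h : IsUnit (A.submatrix id f).det) : A.rank = Fintype.card m := by
  refine le_antisymm A.rank_le_card_height ?_
  rw [← rank_of_isUnit _ ((isUnit_iff_isUnit_det _).2 h)]
  exact rank_submatrix_le A id f

section Bidiagonal

variable {R : Type*} {k : ℕ}

def bidiagonal [Zero R] (a b : Fin k → R) : Matrix (Fin k) (Fin (k + 1)) R :=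
  of fun r c => if c = r.castSucc then a r else if c = r.succ then b r else 0

theorem bidiagonal_map [Zero R] {S : Type*} [Zero S] (a b : Fin k → R) (f : R → S)
    (hf : f 0 = 0) : (bidiagonal a b).map f = bidiagonal (f ∘ a) (f ∘ b) := by
  ext r c
  simp only [bidiagonal, map_apply, of_apply, Function.comp_apply]
  split_ifs <;> simp [hf]

theorem bidiagonal_mulVec [NonUnitalNonAssocSemiring R] (a b : Fin k → R)
    (v : Fin (k + 1) → R) (r : Fin k) :
    (bidiagonal a b *ᵥ v) r = a r * v r.castSucc + b r * v r.succ := by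
  have hne : r.castSucc ≠ r.succ := Fin.castSucc_lt_succ.ne
  rw [mulVec, dotProduct, Fintype.sum_eq_add r.castSucc r.succ hne]
  · simp [bidiagonal, hne.symm]
  · rintro c ⟨h1, h2⟩
    simp [bidiagonal, h1, h2]

theorem det_bidiagonal_submatrix_castSucc [CommRing R] (a b : Fin k → R) :
    ((bidiagonal a b).submatrix id Fin.castSucc).det = ∏ r, a r := by
  rw [det_of_isUpperTriangular]
  · simp [bidiagonal]
  · intro i j (hji : j < i)
    have h1 : j.castSucc ≠ i.castSucc := by simpa using hji.ne
    have h2 : j.castSucc ≠ i.succ := by simp [Fin.ext_iff]; omega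
    simp [bidiagonal, h1, h2]

theorem det_bidiagonal_submatrix_succ [CommRing R] (a b : Fin k → R) :
    ((bidiagonal a b).submatrix id Fin.succ).det = ∏ r, b r := by
  rw [det_of_isLowerTriangular]
  · simp [bidiagonal, Fin.castSucc_lt_succ.ne']
  · intro i j (hij : i < j)
    have h1 : j.succ ≠ i.castSucc := by simp [Fin.ext_iff]; omega
    have h2 : j.succ ≠ i.succ := by simpa using hij.ne'
    simp [bidiagonal, h1, h2]

theorem rank_bidiagonal_of_ne_zero_left (a b : Fin k → F) (ha : ∀ r, a r ≠ 0) :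
    (bidiagonal a b).rank = k := by
  simpa using rank_eq_card_of_isUnit_det_submatrix _ Fin.castSucc
    (by rw [det_bidiagonal_submatrix_castSucc]
        exact (Finset.prod_ne_zero_iff.2 fun r _ => ha r).isUnit)

theorem rank_bidiagonal_of_ne_zero_right (a b : Fin k → F) (hb : ∀ r, b r ≠ 0) :
    (bidiagonal a b).rank = k := by
  simpa using rank_eq_card_of_isUnit_det_submatrix _ Fin.succ
    (by rw [det_bidiagonal_submatrix_succ]
        exact (Finset.prod_ne_zero_iff.2 fun r _ => hb r).isUnit)

end Bidiagonal

section BernsteinPencil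

variable {R : Type*} [CommRing R]

noncomputable def bernstein (α β : R) (k : ℕ) (i : Fin (k + 1)) : R[X] :=
  (k.choose (i : ℕ) : R[X]) * ((X - C α) ^ (i : ℕ) * (C β - X) ^ (k - (i : ℕ)))

noncomputable def bernsteinPencil (α β : R) (k : ℕ) : Matrix (Fin k) (Fin (k + 1)) R[X] :=
  bidiagonal (fun r => (k.choose (k - 1 - r) : R[X]) * (X - C β))
    (fun r => (k.choose (k - r) : R[X]) * (X - C α))

theorem bernsteinPencil_mulVec_bernstein_rev (α β : R) (k : ℕ) :
    bernsteinPencil α β k *ᵥ (fun i => bernstein α β k i.rev) = 0 := by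
  funext r
  obtain ⟨n, hn⟩ : ∃ n, k = r + n + 1 := ⟨k - r - 1, by omega⟩
  rw [bernsteinPencil, bidiagonal_mulVec, Pi.zero_apply]
  simp only [bernstein, Fin.val_rev, Fin.val_castSucc, Fin.val_succ]
  rw [show k + 1 - (r + 1) = n + 1 by omega, show k + 1 - (r + 1 + 1) = n by omega,
    show k - 1 - r = n by omega, show k - r = n + 1 by omega, show k - (n + 1) = r by omega,
    show k - n = r + 1 by omega]
  ring

end BernsteinPencil

theorem rank_map_eval_bernsteinPencil [CharZero F] {α β : F} (hαβ : α ≠ β) (k : ℕ)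
    (x : F) :
    ((bernsteinPencil α β k).map (eval x)).rank = k := by
  rw [bernsteinPencil, bidiagonal_map _ _ _ eval_zero]
  by_cases hx : x = β
  · apply rank_bidiagonal_of_ne_zero_right
    intro r
    simp [hx, sub_ne_zero.2 hαβ.symm, Nat.choose_eq_zero_iff]
  · apply rank_bidiagonal_of_ne_zero_left
    intro r
    simp [sub_ne_zero.2 hx, Nat.choose_eq_zero_iff]; omega

theorem rank_map_coeff_one_bernsteinPencil [CharZero F] (α β : F) (k : ℕ) :
    ((bernsteinPencil α β k).map (coeff · 1)).rank = k := by
  rw [bernsteinPencil, bidiagonal_map _ _ _ (coeff_zero 1)]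
  apply rank_bidiagonal_of_ne_zero_left
  intro r
  simp [Nat.choose_eq_zero_iff]; omega

theorem statement7_general [CharZero F] (α β : F) (hαβ : α ≠ β) (k : ℕ) :
    let φ : Fin (k + 1) → Polynomial F := fun i =>
      (k.choose (i : ℕ) : Polynomial F) *
        ((Polynomial.X - Polynomial.C α) ^ (i : ℕ) *
          (Polynomial.C β - Polynomial.X) ^ (k - (i : ℕ)))
    let π : Fin (k + 1) → Polynomial F := fun i => φ i.rev
    let L : Matrix (Fin k) (Fin (k + 1)) (Polynomial F) :=
      Matrix.of fun r c =>
        if c = r.castSucc then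
          (k.choose (k - 1 - (r : ℕ)) : Polynomial F) * (Polynomial.X - Polynomial.C β)
        else if c = r.succ then
          (k.choose (k - (r : ℕ)) : Polynomial F) * (Polynomial.X - Polynomial.C α)
        else 0
    L.mulVec π = 0 ∧
    (∀ x : F, (L.map (Polynomial.eval x)).rank = k) ∧
    (Matrix.of fun (r : Fin k) (c : Fin (k + 1)) => (L r c).coeff 1).rank = k :=
  -- `L` is `bernsteinPencil α β k` and `π` is the reversed Bernstein vector, definitionally
  ⟨bernsteinPencil_mulVec_bernstein_rev α β k, rank_map_eval_bernsteinPencil hαβ k,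
    rank_map_coeff_one_bernsteinPencil α β k⟩

/-- The explicit bidiagonal pencil is a dual minimal basis for the Bernstein
basis of degree `k` on `[α, β]`. -/
theorem statement7 [CharZero F] (α β : F) (hαβ : α ≠ β) (k : ℕ) (hk : 1 ≤ k) :
    let φ : Fin (k + 1) → Polynomial F := fun i =>
      (k.choose (i : ℕ) : Polynomial F) *
        ((Polynomial.X - Polynomial.C α) ^ (i : ℕ) *
          (Polynomial.C β - Polynomial.X) ^ (k - (i : ℕ)))
    let π : Fin (k + 1) → Polynomial F := fun i => φ i.rev
    let L : Matrix (Fin k) (Fin (k + 1)) (Polynomial F) :=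
      Matrix.of fun r c =>
        if c = r.castSucc then
          (k.choose (k - 1 - (r : ℕ)) : Polynomial F) * (Polynomial.X - Polynomial.C β)
        else if c = r.succ then
          (k.choose (k - (r : ℕ)) : Polynomial F) * (Polynomial.X - Polynomial.C α)
        else 0
    L.mulVec π = 0 ∧
    (∀ x : F, (L.map (Polynomial.eval x)).rank = k) ∧
    (Matrix.of fun (r : Fin k) (c : Fin (k + 1)) => (L r c).coeff 1).rank = k :=
  statement7_general α β hαβ k

end PaperLin
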